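/- arXiv:math/0409409 — 7 statements merged into one kernel-verified Lean document; each statement's English description precedes it below -/
import Mathlib

section
/- Let L be a rank-2 positive definite even integral lattice containing a norm-2 vector r such that the norm-2 vectors of L span a rank-1 sublattice. Let s generate the annihilator of r in L (the vectors orthogonal to r). Then (s,s) ≥ 4, and if L strictly contains the span of {r,s}, then (s,s) ≡ 6 (mod 8) and (s,s) ≥ 14. -/
/-!
As `(r, r) = 2`, every `x` satisfies `2x - (x, r) r ⊥ r`, so `2L ⊆ ℤr + ℤs`. Reducing the
coefficients mod 2, a vector outside `ℤr + ℤs` yields `y` with `2y ∈ {r, s, r + s}`.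
`2y = r` is impossible since `4 (y, y) = 2`, and `2y = s` puts `y` in the annihilator `ℤs`.
Hence `2y = r + s` and `4 (y, y) = 2 + (s, s)`, so `(s, s) ≡ 6 mod 8` because `(y, y)` is even.
Finally `(s, s) = 2` or `(s, s) = 6` would make `s`, resp. `y`, a norm-2 vector independent
of `r`, contradicting that the norm-2 vectors span a rank-1 sublattice.
-/

open Module Submodule LinearMap

theorem LinearIndependent.two_le_finrank_span {R M : Type*} [Ring R] [Nontrivial R]
    [StrongRankCondition R] [AddCommGroup M] [Module R M] {S : Set M}
    [Module.Finite R (span R S)] {u v : M}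
    (huv : LinearIndependent R ![u, v]) (hu : u ∈ S) (hv : v ∈ S) :
    2 ≤ finrank R (span R S) := by
  have hle : span R (Set.range ![u, v]) ≤ span R S :=
    span_mono (by simp [Set.insert_subset_iff, hu, hv])
  simpa [finrank_span_eq_card huv] using Submodule.finrank_mono hle

theorem linearIndependent_pair_of_det_ne_zero {R M : Type*} [CommRing R] [NoZeroDivisors R]
    [AddCommGroup M] [Module R M] {u v : M} (f g : M →ₗ[R] R)
    (hdet : f u * g v - f v * g u ≠ 0) : LinearIndependent R ![u, v] := by
  refine LinearIndependent.pair_iff.2 fun a b hab => ?_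
  have hf : a * f u + b * f v = 0 := by simpa using congrArg f hab
  have hg : a * g u + b * g v = 0 := by simpa using congrArg g hab
  have ha : a * (f u * g v - f v * g u) = 0 := by linear_combination g v * hf - f v * hg
  have hb : b * (f u * g v - f v * g u) = 0 := by linear_combination f u * hg - g u * hf
  exact ⟨(mul_eq_zero.1 ha).resolve_right hdet, (mul_eq_zero.1 hb).resolve_right hdet⟩

theorem ne_zero_of_span_singleton_eq_ker {R M : Type*} [Ring R] [StrongRankCondition R]
    [AddCommGroup M] [Module R M] {f : M →ₗ[R] R} (hM : 1 < finrank R M) {s : M}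
    (hs : span R {s} = ker f) : s ≠ 0 := by
  rintro rfl
  have hinj : Function.Injective f := ker_eq_bot.1 (by rw [← hs, span_zero_singleton])
  have := finrank_le_finrank_of_injective hinj
  rw [finrank_self] at this
  omega

section RootAnnihilator

variable {L : Type*} [AddCommGroup L] {B : L →ₗ[ℤ] L →ₗ[ℤ] ℤ} {r s : L}

theorem apply_eq_zero_of_span_singleton_eq_ker (hs : span ℤ {s} = ker (B.flip r)) :
    B s r = 0 := by
  simpa using hs.le (mem_span_singleton_self s)

theorem exists_two_smul_eq_of_span_singleton_eq_ker (hr : B r r = 2)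
    (hs : span ℤ {s} = ker (B.flip r)) (x : L) : ∃ k : ℤ, (2 : ℤ) • x = B x r • r + k • s := by
  have hker : (2 : ℤ) • x - B x r • r ∈ ker (B.flip r) := by simp [hr, mul_comm]
  rw [← hs, mem_span_singleton] at hker
  obtain ⟨k, hk⟩ := hker
  exact ⟨k, by rw [hk]; abel⟩

theorem exists_two_smul_eq_add_of_notMem_span_pair [IsAddTorsionFree L] (hr : B r r = 2)
    (hs : span ℤ {s} = ker (B.flip r)) {x : L} (hx : x ∉ span ℤ {r, s}) :
    ∃ y : L, (2 : ℤ) • y = r + s := by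
  obtain ⟨k, hk⟩ := exists_two_smul_eq_of_span_singleton_eq_ker hr hs x
  obtain ⟨a, ha⟩ := Int.even_or_odd' (B x r)
  obtain ⟨b, hb⟩ := Int.even_or_odd' k
  set y := x - a • r - b • s with hy_def
  have hy : y ∉ span ℤ {r, s} := fun h =>
    hx (by simpa [y] using add_mem h (mem_span_pair.2 ⟨a, b, rfl⟩))
  rcases ha with ha | ha <;> rcases hb with hb | hb <;> rw [ha, hb] at hk
  · have h2y : (2 : ℤ) • y = 0 := by rw [hy_def]; linear_combination (norm := module) hk
    simp only [smul_eq_zero, OfNat.ofNat_ne_zero, false_or] at h2y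
    exact absurd (h2y ▸ zero_mem _) hy
  · have h2y : (2 : ℤ) • y = s := by rw [hy_def]; linear_combination (norm := module) hk
    have hyr : B y r = 0 := by
      have := congrArg (B.flip r) h2y
      simp only [map_zsmul, flip_apply, smul_eq_mul,
        apply_eq_zero_of_span_singleton_eq_ker hs] at this
      omega
    have hy_ker : y ∈ span ℤ {s} := hs ▸ (by simpa using hyr)
    exact absurd (span_mono (by simp) hy_ker) hy
  · have h2y : (2 : ℤ) • y = r := by rw [hy_def]; linear_combination (norm := module) hk
    have := congrArg (fun z => B z z) h2y
    simp only [map_zsmul, LinearMap.smul_apply, smul_eq_mul, hr] at this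
    omega
  · exact ⟨y, by rw [hy_def]; linear_combination (norm := module) hk⟩

theorem four_mul_apply_self_eq_of_two_smul_eq_add (hrs : B r s = 0) (hsr : B s r = 0) {y : L}
    (hy : (2 : ℤ) • y = r + s) : 4 * B y y = B r r + B s s := by
  have := congrArg (fun z => B z z) hy
  simp only [map_zsmul, map_add, LinearMap.add_apply, LinearMap.smul_apply, smul_eq_mul, hrs,
    hsr] at this
  linarith

theorem linearIndependent_pair_of_two_smul_eq_add (hr : B r r ≠ 0) (hss : B s s ≠ 0)
    (hrs : B r s = 0) {y : L} (hy : (2 : ℤ) • y = r + s) : LinearIndependent ℤ ![y, r] := by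
  have hys : 2 * B y s = B s s := by simpa [hrs] using congrArg (B.flip s) hy
  refine linearIndependent_pair_of_det_ne_zero (B.flip r) (B.flip s) ?_
  simp only [flip_apply, hrs, mul_zero, zero_sub, neg_ne_zero]
  exact mul_ne_zero hr (by omega)

end RootAnnihilator

/-- rank-2 positive definite even lattice whose norm-2 vectors span a
rank-1 sublattice; `s` generates the annihilator of a norm-2 vector `r`. -/
theorem stmt_2 (L : Type*) [AddCommGroup L] [Module ℤ L] [Module.Free ℤ L]
    [Module.Finite ℤ L] (hrank : Module.finrank ℤ L = 2)
    (B : L →ₗ[ℤ] L →ₗ[ℤ] ℤ)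
    (hsymm : ∀ x y, B x y = B y x)
    (heven : ∀ x, Even (B x x))
    (hpos : ∀ x, x ≠ 0 → 0 < B x x)
    (r : L) (hr : B r r = 2)
    (hspan1 : Module.finrank ℤ (Submodule.span ℤ {x : L | B x x = 2}) = 1)
    (s : L) (hs : Submodule.span ℤ ({s} : Set L) = LinearMap.ker (B.flip r)) :
    4 ≤ B s s ∧
      (Submodule.span ℤ ({r, s} : Set L) ≠ ⊤ → B s s % 8 = 6 ∧ 14 ≤ B s s) := by
  -- make `•` on `L` the canonical `zsmul`, which the lemmas above are stated for
  obtain rfl : ‹Module ℤ L› = AddCommGroup.toIntModule L := Subsingleton.elim _ _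
  have : IsAddTorsionFree L := .of_isTorsionFree ℤ L
  have hsr : B s r = 0 := apply_eq_zero_of_span_singleton_eq_ker hs
  have hrs : B r s = 0 := by rw [hsymm, hsr]
  have hss : 0 < B s s := hpos s (ne_zero_of_span_singleton_eq_ker (by omega) hs)
  have not_indep_of_norm_two (u v : L) (hu : B u u = 2) (hv : B v v = 2) :
      ¬ LinearIndependent ℤ ![u, v] :=
    fun huv => by have := huv.two_le_finrank_span (S := {x | B x x = 2}) hu hv; omega
  have h4 : 4 ≤ B s s := by
    have : B s s ≠ 2 := fun h2 => not_indep_of_norm_two r s hr h2 <|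
      linearIndependent_pair_of_det_ne_zero (B.flip r) (B.flip s) (by simp [hr, hsr, hrs, h2])
    obtain ⟨c, hc⟩ := heven s
    omega
  refine ⟨h4, fun hne => ?_⟩
  obtain ⟨x, -, hx⟩ := SetLike.exists_of_lt (lt_top_iff_ne_top.2 hne)
  obtain ⟨y, hy⟩ := exists_two_smul_eq_add_of_notMem_span_pair hr hs hx
  have hyy := four_mul_apply_self_eq_of_two_smul_eq_add hrs hsr hy
  have h6 : B s s ≠ 6 := fun h6 => not_indep_of_norm_two y r (by omega) hr <|
    linearIndependent_pair_of_two_smul_eq_add (by omega) (by omega) hrs hy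
  obtain ⟨c, hc⟩ := heven y
  omega
end

section
/- Let L be a rank-2 positive definite even integral lattice with no norm-2 vectors, containing a norm-4 vector r such that the norm-4 vectors span a rank-1 sublattice. Let s generate the annihilator of r in L and let N = ℤr + ℤs. Then (s,s) ≥ 6, the quotient L/N embeds into ℤ/4ℤ, and: if |L/N| = 2 then (s,s) ≡ 4 (mod 8) and (s,s) ≥ 8; if |L/N| = 4 then (s,s) ≡ 28 (mod 32) and (s,s) ≥ 28. -/
set_option maxHeartbeats 1000000


/-- rank-2 positive definite even lattice, no norm-2 vectors, norm-4 vectors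
span a rank-1 sublattice; `s` generates the annihilator of the norm-4 vector `r`,
`N = ℤr + ℤs`. -/
theorem stmt_4 (L : Type*) [AddCommGroup L] [Module ℤ L] [Module.Free ℤ L]
    [Module.Finite ℤ L] (hrank : Module.finrank ℤ L = 2)
    (B : L →ₗ[ℤ] L →ₗ[ℤ] ℤ)
    (hsymm : ∀ x y, B x y = B y x)
    (heven : ∀ x, Even (B x x))
    (hpos : ∀ x, x ≠ 0 → 0 < B x x)
    (hno2 : ∀ x : L, B x x ≠ 2)
    (r : L) (hr : B r r = 4)
    (hspan1 : Module.finrank ℤ (Submodule.span ℤ {x : L | B x x = 4}) = 1)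
    (s : L) (hs : Submodule.span ℤ ({s} : Set L) = LinearMap.ker (B.flip r))
    (N : Submodule ℤ L) (hN : N = Submodule.span ℤ ({r, s} : Set L)) :
    6 ≤ B s s ∧
      (∃ f : (L ⧸ N) →+ ZMod 4, Function.Injective f) ∧
      (Nat.card (L ⧸ N) = 2 → B s s % 8 = 4 ∧ 8 ≤ B s s) ∧
      (Nat.card (L ⧸ N) = 4 → B s s % 32 = 28 ∧ 28 ≤ B s s) := by
  -- basic facts
  have hsr : B s r = 0 := by
    have hmem : s ∈ LinearMap.ker (B.flip r) := by
      rw [← hs]; exact Submodule.mem_span_singleton_self s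
    simpa using hmem
  have hrs : B r s = 0 := by rw [hsymm]; exact hsr
  have hker : ∀ x : L, B x r = 0 → ∃ c : ℤ, x = c • s := by
    intro x hx
    have hmem : x ∈ Submodule.span ℤ ({s} : Set L) := by
      rw [hs]; simpa using hx
    obtain ⟨c, hc⟩ := Submodule.mem_span_singleton.mp hmem
    exact ⟨c, by rw [← hc]; exact (Int.cast_smul_eq_zsmul ℤ c s).symm ▸ rfl⟩
  have hsne : s ≠ 0 := by
    intro h
    have hker0 : LinearMap.ker (B.flip r) = ⊥ := by
      rw [← hs, h, Submodule.span_zero_singleton]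
    have hinj : Function.Injective (B.flip r) := LinearMap.ker_eq_bot.mp hker0
    have hle := LinearMap.finrank_le_finrank_of_injective hinj
    rw [hrank, Module.finrank_self] at hle
    omega
  have hmpos : 0 < B s s := hpos s hsne
  have hmeven : Even (B s s) := heven s
  have hm2 : B s s ≠ 2 := hno2 s
  have hm4 : B s s ≠ 4 := by
    intro h4
    have hrmem : r ∈ Submodule.span ℤ {x : L | B x x = 4} :=
      Submodule.subset_span hr
    have hsmem : s ∈ Submodule.span ℤ {x : L | B x x = 4} :=
      Submodule.subset_span h4
    have hli : LinearIndependent ℤ ![r, s] := by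
      rw [LinearIndependent.pair_iff]
      intro a b hab
      have h1 := congrArg (fun v => B v r) hab
      simp only [map_add, map_smul, LinearMap.add_apply, LinearMap.smul_apply,
        smul_eq_mul, hr, hsr, map_zero, LinearMap.zero_apply] at h1
      have ha : a = 0 := by omega
      subst ha
      have h2 := congrArg (fun v => B v s) hab
      simp only [map_add, map_smul, LinearMap.add_apply, LinearMap.smul_apply,
        smul_eq_mul, hrs, map_zero, LinearMap.zero_apply] at h2
      constructor
      · rfl
      · rcases mul_eq_zero.mp (by linarith : b * B s s = 0) with hb | hb
        · exact hb
        · omega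
    haveI : IsNoetherian ℤ L := isNoetherian_of_isNoetherianRing_of_finite ℤ L
    haveI := Module.Finite.iff_fg.mpr
      (IsNoetherian.noetherian (Submodule.span ℤ {x : L | B x x = 4}))
    have h2 := finrank_span_eq_card hli
    have hle2 : Submodule.span ℤ (Set.range ![r, s]) ≤
        Submodule.span ℤ {x : L | B x x = 4} := by
      rw [Submodule.span_le]
      rintro z ⟨i, rfl⟩
      fin_cases i
      exacts [hrmem, hsmem]
    have hmono := Submodule.finrank_mono hle2
    rw [h2, Fintype.card_fin] at hmono
    haveI : Unique (Module ℤ (Submodule.span ℤ {x : L | B x x = 4})) :=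
      AddCommGroup.uniqueIntModule
    have hspan1' : Module.finrank ℤ (Submodule.span ℤ {x : L | B x x = 4}) ≤ 1 := by
      rw [hspan1]
    have hbridge : Module.finrank ℤ (Submodule.span ℤ {x : L | B x x = 4})
        = @Module.finrank ℤ (Submodule.span ℤ {x : L | B x x = 4}) _ _
          (Submodule.span ℤ {x : L | B x x = 4}).module := by
      congr 1
      exact Subsingleton.elim _ _
    rw [hbridge] at hspan1'
    omega
  have hm6 : 6 ≤ B s s := by
    obtain ⟨w, hw⟩ := hmeven
    omega
  -- the linear map to ZMod 4
  set ψ : L →ₗ[ℤ] ZMod 4 :=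
    ((Int.castAddHom (ZMod 4)).toIntLinearMap).comp (B.flip r) with hψdef
  have hψapp : ∀ z : L, ψ z = ((B z r : ℤ) : ZMod 4) := fun z => rfl
  have hle : N ≤ LinearMap.ker ψ := by
    rw [hN, Submodule.span_le]
    intro z hz
    simp only [Set.mem_insert_iff, Set.mem_singleton_iff] at hz
    rcases hz with rfl | rfl
    · have hv : ψ z = 0 := by rw [hψapp, hr]; push_cast; decide
      simpa [LinearMap.mem_ker] using hv
    · have hv : ψ z = 0 := by rw [hψapp, hsr]; exact Int.cast_zero
      simpa [LinearMap.mem_ker] using hv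
  have hrN : r ∈ N := by
    rw [hN]; exact Submodule.subset_span (Set.mem_insert _ _)
  have hsN : s ∈ N := by
    rw [hN]; exact Submodule.subset_span (Set.mem_insert_of_mem _ rfl)
  have hkerle : LinearMap.ker ψ ≤ N := by
    intro z hz
    have hz0 : ((B z r : ℤ) : ZMod 4) = 0 := by
      rw [← hψapp]; exact hz
    have hdvd : (4 : ℤ) ∣ B z r := by
      exact_mod_cast (ZMod.intCast_zmod_eq_zero_iff_dvd _ 4).mp hz0
    obtain ⟨k, hk⟩ := hdvd
    have hzr : B (z - k • r) r = 0 := by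
      have hexp : B (z - k • r) r = B z r - k * B r r := by simp
      rw [hexp, hr, hk]; ring
    obtain ⟨c, hc⟩ := hker _ hzr
    have hmem1 : z - k • r ∈ N := by rw [hc]; exact zsmul_mem hsN c
    have hmem2 : k • r ∈ N := zsmul_mem hrN k
    have := N.add_mem hmem1 hmem2
    rwa [sub_add_cancel] at this
  letI : Module ℤ (L ⧸ N) := Submodule.Quotient.module N
  have finj : Function.Injective (N.liftQ ψ hle) :=
    LinearMap.ker_eq_bot.mp (Submodule.ker_liftQ_eq_bot _ _ _ hkerle)
  have hflapp : ∀ z : L,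
      N.liftQ ψ hle (Submodule.Quotient.mk z) = ((B z r : ℤ) : ZMod 4) := by
    intro z; rw [Submodule.liftQ_apply]; exact hψapp z
  refine ⟨hm6, ⟨(N.liftQ ψ hle).toAddMonoidHom, by simpa using finj⟩, ?_, ?_⟩
  · -- card 2 case
    intro hcard
    have hfin : Finite (L ⧸ N) := Nat.finite_of_card_ne_zero (by omega)
    have hnt : Nontrivial (L ⧸ N) := Finite.one_lt_card_iff_nontrivial.mp (by omega)
    obtain ⟨y, hy⟩ := exists_ne (0 : L ⧸ N)
    have h2y : (2 : ℕ) • y = 0 := by rw [← hcard]; exact card_nsmul_eq_zero'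
    have hfy : N.liftQ ψ hle y = 2 := by
      have h1 : N.liftQ ψ hle y ≠ 0 := fun h => hy (finj (by rw [h, map_zero]))
      have h2 : N.liftQ ψ hle y + N.liftQ ψ hle y = 0 := by
        have h3 := congrArg (N.liftQ ψ hle) h2y
        rw [map_nsmul, map_zero, two_nsmul] at h3
        exact h3
      revert h1 h2
      generalize N.liftQ ψ hle y = z
      revert z; decide
    obtain ⟨x, rfl⟩ := Submodule.Quotient.mk_surjective N y
    rw [hflapp] at hfy
    have hz0 : ((B x r - 2 : ℤ) : ZMod 4) = 0 := by push_cast; rw [hfy]; ring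
    obtain ⟨k, hk'⟩ := (ZMod.intCast_zmod_eq_zero_iff_dvd _ 4).mp hz0
    have hk : B x r = 4 * k + 2 := by omega
    have hx'r : B (x - k • r) r = 2 := by
      have hexp : B (x - k • r) r = B x r - k * B r r := by simp
      rw [hexp, hr, hk]; ring
    have hur : B ((2 : ℤ) • (x - k • r) - r) r = 0 := by
      have hexp : B ((2 : ℤ) • (x - k • r) - r) r
          = 2 * B (x - k • r) r - B r r := by simp
      rw [hexp, hx'r, hr]; ring
    obtain ⟨c, hc⟩ := hker _ hur
    have huu : c * c * B s s = 4 * B (x - k • r) (x - k • r) - 4 := by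
      have h1 : B ((2 : ℤ) • (x - k • r) - r) ((2 : ℤ) • (x - k • r) - r)
          = 2 * 2 * B (x - k • r) (x - k • r) - 2 * B (x - k • r) r
            - 2 * B r (x - k • r) + B r r := by
        simp; ring
      have h2 : B ((2 : ℤ) • (x - k • r) - r) ((2 : ℤ) • (x - k • r) - r)
          = c * c * B s s := by
        rw [hc]; simp; ring
      rw [h1, hsymm r (x - k • r), hx'r, hr] at h2
      linarith
    obtain ⟨e, he⟩ := heven (x - k • r)
    obtain ⟨w, hw⟩ := hmeven
    obtain ⟨q, hq⟩ : ∃ q, B (x - k • r) (x - k • r) = q := ⟨_, rfl⟩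
    obtain ⟨m, hm⟩ : ∃ m, B s s = m := ⟨_, rfl⟩
    rw [hq, hm] at huu
    rw [hq] at he
    rw [hm] at hw hm6 ⊢
    rcases Int.even_or_odd c with ⟨d, hd⟩ | ⟨d, hd⟩
    · exfalso
      have h3 : c * c * m = 4 * (d * d * m) := by rw [hd]; ring
      have h4 : d * d * m = 2 * (d * d * w) := by rw [hw]; ring
      obtain ⟨P, hP⟩ : ∃ P, d * d * w = P := ⟨_, rfl⟩
      rw [hP] at h4
      have h6 : 8 * P = 4 * q - 4 := by linarith
      omega
    · obtain ⟨t0, ht0⟩ := Int.even_mul_succ_self d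
      have hcc : c * c = 4 * (d * (d + 1)) + 1 := by rw [hd]; ring
      rw [ht0] at hcc
      have key2 : (4 * (t0 + t0) + 1) * m = 4 * q - 4 := by rw [← hcc]; exact huu
      have hexp : (4 * (t0 + t0) + 1) * m = 8 * (t0 * m) + m := by ring
      obtain ⟨X, hX⟩ : ∃ X, t0 * m = X := ⟨_, rfl⟩
      rw [hX] at hexp
      have key3 : 8 * X + m = 4 * q - 4 := by linarith
      constructor <;> omega
  · -- card 4 case
    intro hcard
    have hbij : Function.Bijective (N.liftQ ψ hle) :=
      (Nat.bijective_iff_injective_and_card _).mpr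
        ⟨finj, by rw [hcard, Nat.card_zmod]⟩
    obtain ⟨y, hy1⟩ := hbij.2 (1 : ZMod 4)
    obtain ⟨x, rfl⟩ := Submodule.Quotient.mk_surjective N y
    rw [hflapp] at hy1
    have hz0 : ((B x r - 1 : ℤ) : ZMod 4) = 0 := by push_cast; rw [hy1]; ring
    obtain ⟨k, hk'⟩ := (ZMod.intCast_zmod_eq_zero_iff_dvd _ 4).mp hz0
    have hk : B x r = 4 * k + 1 := by omega
    have hx'r : B (x - k • r) r = 1 := by
      have hexp : B (x - k • r) r = B x r - k * B r r := by simp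
      rw [hexp, hr, hk]; ring
    have hur : B ((4 : ℤ) • (x - k • r) - r) r = 0 := by
      have hexp : B ((4 : ℤ) • (x - k • r) - r) r
          = 4 * B (x - k • r) r - B r r := by simp
      rw [hexp, hx'r, hr]; ring
    obtain ⟨c, hc⟩ := hker _ hur
    have huu : c * c * B s s = 16 * B (x - k • r) (x - k • r) - 4 := by
      have h1 : B ((4 : ℤ) • (x - k • r) - r) ((4 : ℤ) • (x - k • r) - r)
          = 4 * 4 * B (x - k • r) (x - k • r) - 4 * B (x - k • r) r
            - 4 * B r (x - k • r) + B r r := by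
        simp; ring
      have h2 : B ((4 : ℤ) • (x - k • r) - r) ((4 : ℤ) • (x - k • r) - r)
          = c * c * B s s := by
        rw [hc]; simp; ring
      rw [h1, hsymm r (x - k • r), hx'r, hr] at h2
      linarith
    obtain ⟨e, he⟩ := heven (x - k • r)
    obtain ⟨w, hw⟩ := hmeven
    obtain ⟨q, hq⟩ : ∃ q, B (x - k • r) (x - k • r) = q := ⟨_, rfl⟩
    obtain ⟨m, hm⟩ : ∃ m, B s s = m := ⟨_, rfl⟩
    rw [hq, hm] at huu
    rw [hq] at he
    rw [hm] at hw hm6 ⊢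
    rcases Int.even_or_odd c with ⟨d, hd⟩ | ⟨d, hd⟩
    · exfalso
      have h3 : c * c * m = 4 * (d * d * m) := by rw [hd]; ring
      have h4 : d * d * m = 2 * (d * d * w) := by rw [hw]; ring
      obtain ⟨P, hP⟩ : ∃ P, d * d * w = P := ⟨_, rfl⟩
      rw [hP] at h4
      have h6 : 8 * P = 16 * q - 4 := by linarith
      omega
    · obtain ⟨t0, ht0⟩ := Int.even_mul_succ_self d
      have hcc : c * c = 4 * (d * (d + 1)) + 1 := by rw [hd]; ring
      rw [ht0] at hcc
      have key2 : (4 * (t0 + t0) + 1) * m = 16 * q - 4 := by rw [← hcc]; exact huu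
      have hexp : (4 * (t0 + t0) + 1) * m = 8 * (t0 * m) + m := by ring
      obtain ⟨X, hX⟩ : ∃ X, t0 * m = X := ⟨_, rfl⟩
      rw [hX] at hexp
      have key3 : 8 * X + m = 16 * q - 4 := by linarith
      have hmod8 : m % 8 = 4 := by omega
      obtain ⟨j, hj⟩ : ∃ j, m = 8 * j + 4 := ⟨(m - 4) / 8, by omega⟩
      have key4 : (4 * (t0 + t0) + 1) * (8 * j + 4) = 16 * q - 4 := by
        rw [← hj]; exact key2
      have hexp2 : (4 * (t0 + t0) + 1) * (8 * j + 4)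
          = 64 * (t0 * j) + 32 * t0 + 8 * j + 4 := by ring
      obtain ⟨Y, hY⟩ : ∃ Y, t0 * j = Y := ⟨_, rfl⟩
      rw [hY] at hexp2
      have key5 : 64 * Y + 32 * t0 + 8 * j + 4 = 16 * q - 4 := by linarith
      constructor <;> omega
end

section
/- Let b be a nonzero complex number. The system of equations in unknowns c, d, c_r, c_s ∈ ℂ with c_r ≠ 0, c_s ≠ 0: (32+2b²)c + 8bd = 1, c = 16c² + 4d² + c_r², c = 16c² + 4d² + c_s², d = 2b(c² + d²), has at most 8 solutions; moreover c_r² = c_s² in every solution, and there are at most two possible values for the pair (c,d). -/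
open Polynomial

/-- the type-2 idempotent system has at most 8 solutions, `c_r² = c_s²`
always, and at most two values of the pair `(c,d)` occur. -/
theorem stmt_8 (b : ℂ) (hb : b ≠ 0) :
    let S : Set (ℂ × ℂ × ℂ × ℂ) :=
      {p | p.2.2.1 ≠ 0 ∧ p.2.2.2 ≠ 0 ∧
        (32 + 2 * b ^ 2) * p.1 + 8 * b * p.2.1 = 1 ∧
        p.1 = 16 * p.1 ^ 2 + 4 * p.2.1 ^ 2 + p.2.2.1 ^ 2 ∧
        p.1 = 16 * p.1 ^ 2 + 4 * p.2.1 ^ 2 + p.2.2.2 ^ 2 ∧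
        p.2.1 = 2 * b * (p.1 ^ 2 + p.2.1 ^ 2)}
    S.ncard ≤ 8 ∧ (∀ p ∈ S, p.2.2.1 ^ 2 = p.2.2.2 ^ 2) ∧
      ((fun p : ℂ × ℂ × ℂ × ℂ => (p.1, p.2.1)) '' S).ncard ≤ 2 := by
  intro S
  set α : ℂ := 32 + 2*b^2 with hα
  set dd : ℂ → ℂ := fun c => (1 - α*c)/(8*b) with hdd
  set r : ℂ → ℂ := fun c => (c - 16*c^2 - 4*(dd c)^2) ^ ((2:ℕ)⁻¹ : ℂ) with hrr
  have hr : ∀ c : ℂ, (r c)^2 = c - 16*c^2 - 4*(dd c)^2 := by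
    intro c
    exact Complex.cpow_nat_inv_pow (c - 16*c^2 - 4*(dd c)^2) (two_ne_zero)
  set P : ℂ[X] := C (64*b^2 + α^2) * X^2 + C (2*α) * X - C 3 with hP
  have hP0 : P ≠ 0 := by
    intro h
    have h0 := congrArg (fun q => Polynomial.eval 0 q) h
    simp [hP] at h0
  have hdeg : P.natDegree ≤ 2 := by
    rw [hP]; compute_degree
  have hcard : P.roots.toFinset.card ≤ 2 :=
    le_trans (Multiset.toFinset_card_le _) (le_trans P.card_roots' hdeg)
  have key : ∀ p ∈ S, p.2.1 = dd p.1 ∧ Polynomial.eval p.1 P = 0 := by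
    rintro ⟨c, d, cr, cs⟩ ⟨h1, h2, h3, h4, h5, h6⟩
    constructor
    · show d = (1 - α*c)/(8*b)
      field_simp
      linear_combination 1*h3
    · show Polynomial.eval c (C (64*b^2 + α^2) * X^2 + C (2*α) * X - C 3) = 0
      simp only [eval_add, eval_sub, eval_mul, eval_pow, eval_C, eval_X, hα]
      linear_combination (-(16*b*d) + ((32+2*b^2)*c + 8*b*d - 1) + 4) * h3 + (-32*b) * h6
  set f : ℂ × ℂ × ℂ → ℂ × ℂ × ℂ × ℂ :=
    fun q => (q.1, dd q.1, q.2.1 * r q.1, q.2.2 * r q.1) with hf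
  set F : Finset (ℂ × ℂ × ℂ × ℂ) :=
    (P.roots.toFinset ×ˢ ({-1,1} : Finset ℂ) ×ˢ ({-1,1} : Finset ℂ)).image f with hF
  have hsub : S ⊆ ↑F := by
    rintro ⟨c, d, cr, cs⟩ hp
    obtain ⟨hd, hroot⟩ := key _ hp
    obtain ⟨h1, h2, h3, h4, h5, h6⟩ := hp
    have hcr2 : cr^2 = (r c)^2 := by
      rw [hr c, ← hd]; linear_combination -h4
    have hcs2 : cs^2 = (r c)^2 := by
      rw [hr c, ← hd]; linear_combination -h5
    have hcr : cr = r c ∨ cr = -(r c) := by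
      rcases mul_eq_zero.1 (show (cr - r c) * (cr + r c) = 0 by linear_combination hcr2) with h | h
      · left; linear_combination h
      · right; linear_combination h
    have hcs : cs = r c ∨ cs = -(r c) := by
      rcases mul_eq_zero.1 (show (cs - r c) * (cs + r c) = 0 by linear_combination hcs2) with h | h
      · left; linear_combination h
      · right; linear_combination h
    refine Finset.mem_coe.2 (Finset.mem_image.2
      ⟨(c, if cr = r c then 1 else -1, if cs = r c then 1 else -1), ?_, ?_⟩)
    · refine Finset.mem_product.2 ⟨?_, Finset.mem_product.2 ⟨?_, ?_⟩⟩
      · exact Multiset.mem_toFinset.2 (Polynomial.mem_roots'.2 ⟨hP0, hroot⟩)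
      · split_ifs <;> simp
      · split_ifs <;> simp
    · simp only [hf]
      refine Prod.ext rfl (Prod.ext hd.symm (Prod.ext ?_ ?_)) <;> dsimp only
      · split_ifs with h
        · rw [one_mul]; exact h.symm
        · rcases hcr with h' | h'
          · exact absurd h' h
          · rw [h']; ring
      · split_ifs with h
        · rw [one_mul]; exact h.symm
        · rcases hcs with h' | h'
          · exact absurd h' h
          · rw [h']; ring
  have hFcard : F.card ≤ 8 := by
    calc F.card ≤ (P.roots.toFinset ×ˢ ({-1,1} : Finset ℂ) ×ˢ ({-1,1} : Finset ℂ)).card :=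
          Finset.card_image_le
    _ = P.roots.toFinset.card * (({-1,1} : Finset ℂ) ×ˢ ({-1,1} : Finset ℂ)).card :=
          Finset.card_product _ _
    _ ≤ 2 * 4 := by
          refine Nat.mul_le_mul hcard ?_
          rw [Finset.card_product]
          have h2 : ({-1, 1} : Finset ℂ).card ≤ 2 :=
            le_trans (Finset.card_insert_le _ _) (by simp)
          calc ({-1,1} : Finset ℂ).card * ({-1,1} : Finset ℂ).card ≤ 2 * 2 :=
                Nat.mul_le_mul h2 h2
          _ = 4 := rfl
    _ = 8 := rfl
  refine ⟨?_, ?_, ?_⟩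
  · calc S.ncard ≤ (↑F : Set (ℂ × ℂ × ℂ × ℂ)).ncard :=
          Set.ncard_le_ncard hsub (F.finite_toSet)
    _ = F.card := Set.ncard_coe_finset F
    _ ≤ 8 := hFcard
  · rintro ⟨c, d, cr, cs⟩ ⟨h1, h2, h3, h4, h5, h6⟩
    show cr^2 = cs^2
    linear_combination h5 - h4
  · set G : Finset (ℂ × ℂ) := P.roots.toFinset.image (fun c => (c, dd c)) with hG
    have hsub2 : (fun p : ℂ × ℂ × ℂ × ℂ => (p.1, p.2.1)) '' S ⊆ ↑G := by
      rintro ⟨c, d⟩ ⟨p, hp, hpe⟩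
      obtain ⟨hd, hroot⟩ := key _ hp
      simp only [hG, Finset.coe_image, Set.mem_image, Finset.mem_coe, Multiset.mem_toFinset]
      refine ⟨p.1, Polynomial.mem_roots'.2 ⟨hP0, hroot⟩, ?_⟩
      have : (p.1, p.2.1) = (c, d) := hpe
      rw [← hd]; exact this
    calc ((fun p : ℂ × ℂ × ℂ × ℂ => (p.1, p.2.1)) '' S).ncard ≤ (↑G : Set (ℂ × ℂ)).ncard :=
          Set.ncard_le_ncard hsub2 (G.finite_toSet)
    _ = G.card := Set.ncard_coe_finset G
    _ ≤ P.roots.toFinset.card := Finset.card_image_le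
    _ ≤ 2 := hcard
end

section
/- Consider the system in real (or complex) unknowns c₁, c₂, c₃, c₄, x: 2cᵢ = 2cᵢ² + 32x² for i = 1,2,3,4; 2x = x(c₁ + c₂ + c₃ + c₄); and 1/4 = (c₁² + c₂² + c₃² + c₄²)/4 + 16x². Then x = 0 and exactly one cᵢ equals 1 while the others equal 0. -/
/-- Virasoro vectors of central charge 1/2 in the `√2A₁ ⊥ √2A₁` algebra:
the system forces `x = 0` and exactly one `cᵢ = 1`, the rest `0`. -/
theorem stmt_10 (c : Fin 4 → ℂ) (x : ℂ)
    (h1 : ∀ i, 2 * c i = 2 * (c i) ^ 2 + 32 * x ^ 2)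
    (h2 : 2 * x = x * (∑ i, c i))
    (h3 : (1 : ℂ) / 4 = (∑ i, (c i) ^ 2) / 4 + 16 * x ^ 2) :
    x = 0 ∧ ∃ i, c i = 1 ∧ ∀ j, j ≠ i → c j = 0 := by
  have e0 := h1 0
  have e1 := h1 1
  have e2 := h1 2
  have e3 := h1 3
  rw [Fin.sum_univ_four] at h2 h3
  -- Σ c = Σ c² + 64 x² = 1
  have hsum : c 0 + c 1 + c 2 + c 3 = 1 := by linear_combination e0 / 2 + e1 / 2 + e2 / 2 + e3 / 2 - 4 * h3
  have hx : x = 0 := by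
    have : x = 0 ∨ (c 0 + c 1 + c 2 + c 3 : ℂ) = 2 := by
      rcases mul_eq_zero.mp (show x * (c 0 + c 1 + c 2 + c 3 - 2) = 0 by linear_combination -h2) with h | h
      · exact Or.inl h
      · right; linear_combination h
    rcases this with h | h
    · exact h
    · exfalso; rw [hsum] at h; norm_num at h
  refine ⟨hx, ?_⟩
  subst hx
  have hC : ∀ i, c i = 0 ∨ c i = 1 := by
    intro i
    have hi := h1 i
    have : c i * (c i - 1) = 0 := by linear_combination -hi / 2
    rcases mul_eq_zero.mp this with h | h
    · exact Or.inl h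
    · right; linear_combination h
  clear h1 h2 h3 e0 e1 e2 e3
  rcases hC 0 with h0 | h0 <;> rcases hC 1 with hh1 | hh1 <;> rcases hC 2 with hh2 | hh2 <;>
      rcases hC 3 with hh3 | hh3 <;> rw [h0, hh1, hh2, hh3] at hsum <;>
    first
      | (exfalso; revert hsum; norm_num; done)
      | (refine ⟨0, h0, ?_⟩; intro j hj; fin_cases j <;>
          first | exact absurd rfl hj | assumption)
      | (refine ⟨1, hh1, ?_⟩; intro j hj; fin_cases j <;>
          first | exact absurd rfl hj | assumption)
      | (refine ⟨2, hh2, ?_⟩; intro j hj; fin_cases j <;>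
          first | exact absurd rfl hj | assumption)
      | (refine ⟨3, hh3, ?_⟩; intro j hj; fin_cases j <;>
          first | exact absurd rfl hj | assumption)
end

section
/- Consider the system in complex unknowns d₁, d₂, d₃, d₄ with d₃ ≠ 0: d₁ = d₁² + 4d₃² + d₄², d₂ = d₂² + d₄², d₃ = 2d₁d₃, d₄ = d₁d₄ + d₂d₄, and 1/2 = d₁²/2 + d₂²/2 + d₄² + 2d₃². Then the system has no solution. -/
/-- the system for a central charge 1 Virasoro vector with `d₃ ≠ 0`
has no solution. -/
theorem stmt_11 (d₁ d₂ d₃ d₄ : ℂ) (hd₃ : d₃ ≠ 0)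
    (e1 : d₁ = d₁ ^ 2 + 4 * d₃ ^ 2 + d₄ ^ 2)
    (e2 : d₂ = d₂ ^ 2 + d₄ ^ 2)
    (e3 : d₃ = 2 * d₁ * d₃)
    (e4 : d₄ = d₁ * d₄ + d₂ * d₄)
    (e5 : (1 : ℂ) / 2 = d₁ ^ 2 / 2 + d₂ ^ 2 / 2 + d₄ ^ 2 + 2 * d₃ ^ 2) :
    False := by
  have h1 : d₁ = 1 / 2 := by
    have h : (2 * d₁ - 1) * d₃ = 0 := by linear_combination -e3
    rcases mul_eq_zero.mp h with h | h
    · linear_combination h / 2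
    · exact absurd h hd₃
  subst h1
  have h4 : d₄ * (d₂ - 1 / 2) = 0 := by linear_combination -e4
  rcases mul_eq_zero.mp h4 with h | h
  · -- d₄ = 0 : from e1, d₃² = 1/16; from e5, d₂² = 1/2; from e2, d₂ = d₂², contradiction
    have h3 : d₃ ^ 2 = 1 / 16 := by linear_combination -e1 / 4 - h * d₄ / 4
    have h2 : d₂ ^ 2 = 1 / 2 := by
      linear_combination -2 * e5 - 4 * h3 - 2 * h * d₄
    have h2' : d₂ = 1 / 2 := by linear_combination e2 + h2 + h * d₄
    rw [h2'] at h2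
    norm_num at h2
  · -- d₂ = 1/2 : from e2, d₄² = 1/4; from e1, d₃² = 0, contradiction
    have h2 : d₂ = 1 / 2 := by linear_combination h
    have h4' : d₄ ^ 2 = 1 / 4 := by
      rw [h2] at e2; linear_combination -e2
    have h3 : d₃ ^ 2 = 0 := by linear_combination -e1 / 4 - h4' / 4
    exact hd₃ (pow_eq_zero_iff (n := 2) (by norm_num) |>.mp h3)
end

section
/- The system of equations over ℂ in unknowns a, b, c, d, e, f: a = 16a² + 4ab + 4ac − 4bc + d², b = 16b² + 4bc + 4ab − 4ac + e², c = 16c² + 4ac + 4bc − 4ab + f², d = 2d(16a + 4b + 4c) + 2ef, e = 2e(4a + 16b + 4c) + 2df, f = 2f(4a + 4b + 16c) + 2de, and 1/16 = 32(a² + b² + c²) + 16(ab + ac + bc) + 2(d² + e² + f²), has exactly 6 solutions: (1/32, 0, 0, ±1/8, 0, 0) and its images under cyclic permutation of (a,b,c) together with the same cyclic permutation of (d,e,f). -/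
/-- the idempotent system for `√2A₂` has exactly the 6 listed solutions. -/
theorem stmt_12 (a b c d e f : ℂ) :
    (a = 16 * a ^ 2 + 4 * a * b + 4 * a * c - 4 * b * c + d ^ 2 ∧
      b = 16 * b ^ 2 + 4 * b * c + 4 * a * b - 4 * a * c + e ^ 2 ∧
      c = 16 * c ^ 2 + 4 * a * c + 4 * b * c - 4 * a * b + f ^ 2 ∧
      d = 2 * d * (16 * a + 4 * b + 4 * c) + 2 * e * f ∧
      e = 2 * e * (4 * a + 16 * b + 4 * c) + 2 * d * f ∧
      f = 2 * f * (4 * a + 4 * b + 16 * c) + 2 * d * e ∧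
      (1 : ℂ) / 16 = 32 * (a ^ 2 + b ^ 2 + c ^ 2) + 16 * (a * b + a * c + b * c)
        + 2 * (d ^ 2 + e ^ 2 + f ^ 2)) ↔
    ((a, b, c, d, e, f) = (1 / 32, 0, 0, 1 / 8, 0, 0) ∨
      (a, b, c, d, e, f) = (1 / 32, 0, 0, -(1 / 8), 0, 0) ∨
      (a, b, c, d, e, f) = (0, 1 / 32, 0, 0, 1 / 8, 0) ∨
      (a, b, c, d, e, f) = (0, 1 / 32, 0, 0, -(1 / 8), 0) ∨
      (a, b, c, d, e, f) = (0, 0, 1 / 32, 0, 0, 1 / 8) ∨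
      (a, b, c, d, e, f) = (0, 0, 1 / 32, 0, 0, -(1 / 8))) := by
  constructor
  · rintro ⟨h1, h2, h3, h4, h5, h6, h7⟩
    by_cases hd : d = 0
    · by_cases he : e = 0
      · by_cases hf : f = 0
        · -- d = e = f = 0 : impossible
          exfalso
          have hQ1 : a - 16*a^2 - 4*a*b - 4*a*c + 4*b*c = (0:ℂ) := by linear_combination h1 + d*hd
          have hQ2 : b - 16*b^2 - 4*b*c - 4*a*b + 4*a*c = (0:ℂ) := by linear_combination h2 + e*he
          have hQ3 : c - 16*c^2 - 4*a*c - 4*b*c + 4*a*b = (0:ℂ) := by linear_combination h3 + f*hf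
          have hW : (1:ℂ)/16 - 32*(a^2+b^2+c^2) - 16*(a*b+a*c+b*c) = 0 := by
            linear_combination h7 + 2*d*hd + 2*e*he + 2*f*hf
          have hone : (1:ℂ) = 0 := by linear_combination (32 + (3919360/833)*c + (-124010496/833)*c^2 + (56623104/49)*c^3 + (176640/833)*b + (-13242368/833)*b*c + (-18874368/833)*b*c^2 + (-2195456/833)*b^2 + (75497472/833)*b^2*c + (-75497472/833)*b^3 + 1024*a + (-19619840/833)*a*c) * hQ1 + (32 + (6862336/833)*c + (-112115712/833)*c^2 + (18874368/833)*c^3 + 1024*b + (37658624/833)*b*c + (-188743680/119)*b*c^2 + (-301989888/833)*b^2*c + (-255488/833)*a + (-35082240/833)*a*c + (75497472/833)*a*c^2 + (8781824/833)*a*b + (301989888/833)*a*b^2) * hQ2 + ((18048/119) + (-990208/833)*c + (-7290880/119)*c^2 + (943718400/833)*c^3 + (-6756864/833)*b + (-34172928/833)*b*c + (471859200/833)*b*c^2 + (-23691264/833)*b^2 + (1132462080/833)*b^2*c + (1132462080/833)*b^3 + (-3813888/833)*a + (1265664/833)*a*c) * hQ3 + (16 + (-288768/119)*c + (3235840/49)*c^2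 + (-471859200/833)*c^3 + (-512)*b + (9809920/833)*b*c + (-512)*a + (9809920/833)*a*c) * hW
          exact one_ne_zero hone
        · -- only f ≠ 0
          have hL : (1:ℂ) - 8*a - 8*b - 32*c = 0 := by
            rcases mul_eq_zero.mp (show f * ((1:ℂ) - 8*a - 8*b - 32*c) = 0 by
              linear_combination h6 + 2*e*hd) with h | h
            · exact absurd h hf
            · exact h
          have hZ1 : a - 16*a^2 - 4*a*b - 4*a*c + 4*b*c = (0:ℂ) := by linear_combination h1 + d*hd
          have hZ2 : b - 16*b^2 - 4*b*c - 4*a*b + 4*a*c = (0:ℂ) := by linear_combination h2 + e*he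
          have hV : (1:ℂ)/16 - 32*(a^2+b^2+c^2) - 16*(a*b+a*c+b*c) - 2*(c - 16*c^2 - 4*a*c - 4*b*c + 4*a*b) = 0 := by
            linear_combination h7 - 2*h3 + 2*d*hd + 2*e*he
          have hcv : c = 1/32 := by linear_combination ((-149/3752) + (-5/67)*c + (-7/67)*b + (-120/469)*b*c + (80/469)*b^2 + (-44/469)*a + (-160/469)*a*c + (-80/469)*a*b) * hL + ((-15/67) + (-1040/469)*c + (40/469)*b) * hZ1 + ((-100/469) + (-1200/469)*c + (-40/469)*b) * hZ2 + ((127/938) + (80/67)*c) * hV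
          have hav : a = 0 := by linear_combination ((235/3752) + (-88/67)*c + (-208/201)*b + (-9472/1407)*b*c + (-11456/1407)*b^2 + (-472/469)*a + (-5312/1407)*a*c + (-10496/1407)*a*b) * hL + ((168/67) + (-56480/1407)*c + (-27680/1407)*b) * hZ1 + ((1132/1407) + (-13280/469)*c + (-27200/1407)*b) * hZ2 + ((-470/469) + (1408/67)*c + (784/67)*b) * hV
          have hbv : b = 0 := by linear_combination ((-27/938) + (108/67)*c + (292/201)*b + (10912/1407)*b*c + (10496/1407)*b^2 + (648/469)*a + (7232/1407)*a*c + (11456/1407)*a*b) * hL + ((-108/67) + (68960/1407)*c + (27200/1407)*b) * hZ1 + ((68/1407) + (18080/469)*c + (27680/1407)*b) * hZ2 + ((216/469) + (-1728/67)*c + (-784/67)*b) * hV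
          subst hav; subst hbv; subst hcv; subst hd; subst he
          have h8 : (f - 1/8) * (f + 1/8) = 0 := by linear_combination -h3
          rcases mul_eq_zero.mp h8 with h9 | h9
          · have : f = 1/8 := by linear_combination h9
            subst this
            exact Or.inr (Or.inr (Or.inr (Or.inr (Or.inl (by norm_num)))))
          · have : f = -(1/8) := by linear_combination h9
            subst this
            exact Or.inr (Or.inr (Or.inr (Or.inr (Or.inr (by norm_num)))))
      · by_cases hf : f = 0
        · -- only e ≠ 0
          have hL : (1:ℂ) - 8*a - 32*b - 8*c = 0 := by
            rcases mul_eq_zero.mp (show e * ((1:ℂ) - 8*a - 32*b - 8*c) = 0 by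
              linear_combination h5 + 2*f*hd) with h | h
            · exact absurd h he
            · exact h
          have hZ1 : a - 16*a^2 - 4*a*b - 4*a*c + 4*b*c = (0:ℂ) := by linear_combination h1 + d*hd
          have hZ2 : c - 16*c^2 - 4*a*c - 4*b*c + 4*a*b = (0:ℂ) := by linear_combination h3 + f*hf
          have hV : (1:ℂ)/16 - 32*(a^2+b^2+c^2) - 16*(a*b+a*c+b*c) - 2*(b - 16*b^2 - 4*b*c - 4*a*b + 4*a*c) = 0 := by
            linear_combination h7 - 2*h2 + 2*d*hd + 2*f*hf
          have hbv : b = 1/32 := by linear_combination ((-149/3752) + (-7/67)*c + (80/469)*c^2 + (-5/67)*b + (-120/469)*b*c + (-44/469)*a + (-80/469)*a*c + (-160/469)*a*b) * hL + ((-15/67) + (40/469)*c + (-1040/469)*b) * hZ1 + ((-100/469) + (-40/469)*c + (-1200/469)*b) * hZ2 + ((127/938) + (80/67)*b) * hV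
          have hav : a = 0 := by linear_combination ((235/3752) + (-208/201)*c + (-11456/1407)*c^2 + (-88/67)*b + (-9472/1407)*b*c + (-472/469)*a + (-10496/1407)*a*c + (-5312/1407)*a*b) * hL + ((168/67) + (-27680/1407)*c + (-56480/1407)*b) * hZ1 + ((1132/1407) + (-27200/1407)*c + (-13280/469)*b) * hZ2 + ((-470/469) + (784/67)*c + (1408/67)*b) * hV
          have hcv : c = 0 := by linear_combination ((-27/938) + (292/201)*c + (10496/1407)*c^2 + (108/67)*b + (10912/1407)*b*c + (648/469)*a + (11456/1407)*a*c + (7232/1407)*a*b) * hL + ((-108/67) + (27200/1407)*c + (68960/1407)*b) * hZ1 + ((68/1407) + (27680/1407)*c + (18080/469)*b) * hZ2 + ((216/469) + (-784/67)*c + (-1728/67)*b) * hV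
          subst hav; subst hbv; subst hcv; subst hd; subst hf
          have h8 : (e - 1/8) * (e + 1/8) = 0 := by linear_combination -h2
          rcases mul_eq_zero.mp h8 with h9 | h9
          · have : e = 1/8 := by linear_combination h9
            subst this
            exact Or.inr (Or.inr (Or.inl (by norm_num)))
          · have : e = -(1/8) := by linear_combination h9
            subst this
            exact Or.inr (Or.inr (Or.inr (Or.inl (by norm_num))))
        · -- d = 0, e ≠ 0, f ≠ 0 : impossible
          exfalso
          have : e * f = 0 := by
            linear_combination (-1/2)*h4 + (((1:ℂ) - 32*a - 8*b - 8*c)/2)*hd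
          exact absurd this (mul_ne_zero he hf)
    · by_cases he : e = 0
      · by_cases hf : f = 0
        · -- only d ≠ 0
          have hL : (1:ℂ) - 32*a - 8*b - 8*c = 0 := by
            rcases mul_eq_zero.mp (show d * ((1:ℂ) - 32*a - 8*b - 8*c) = 0 by
              linear_combination h4 + 2*f*he) with h | h
            · exact absurd h hd
            · exact h
          have hZ1 : b - 16*b^2 - 4*b*c - 4*a*b + 4*a*c = (0:ℂ) := by linear_combination h2 + e*he
          have hZ2 : c - 16*c^2 - 4*a*c - 4*b*c + 4*a*b = (0:ℂ) := by linear_combination h3 + f*hf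
          have hV : (1:ℂ)/16 - 32*(a^2+b^2+c^2) - 16*(a*b+a*c+b*c) - 2*(a - 16*a^2 - 4*a*b - 4*a*c + 4*b*c) = 0 := by
            linear_combination h7 - 2*h1 + 2*e*he + 2*f*hf
          have hav : a = 1/32 := by linear_combination ((-631/15008) + (-23/938)*c + (40/469)*c^2 + (-23/938)*b + (60/469)*b*c + (40/469)*b^2) * hL + ((-275/938) + (300/469)*c + (260/469)*b) * hZ1 + ((-275/938) + (260/469)*c + (300/469)*b) * hZ2 + ((81/469) + (-20/67)*c + (-20/67)*b) * hV
          have hbv : b = 0 := by linear_combination ((81/3752) + (-211/1407)*c + (-1808/1407)*c^2 + (349/1407)*b + (-120/469)*b*c + (1328/1407)*b^2) * hL + ((1763/1407) + (-4520/469)*c + (14120/1407)*b) * hZ1 + ((-113/1407) + (-17240/1407)*c + (3320/469)*b) * hZ2 + ((-162/469) + (432/67)*c + (-352/67)*b) * hV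
          have hcv : c = 0 := by linear_combination ((81/3752) + (349/1407)*c + (1328/1407)*c^2 + (-211/1407)*b + (-120/469)*b*c + (-1808/1407)*b^2) * hL + ((-113/1407) + (3320/469)*c + (-17240/1407)*b) * hZ1 + ((1763/1407) + (14120/1407)*c + (-4520/469)*b) * hZ2 + ((-162/469) + (-352/67)*c + (432/67)*b) * hV
          subst hav; subst hbv; subst hcv; subst he; subst hf
          have h8 : (d - 1/8) * (d + 1/8) = 0 := by linear_combination -h1
          rcases mul_eq_zero.mp h8 with h9 | h9
          · have : d = 1/8 := by linear_combination h9
            subst this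
            exact Or.inl (by norm_num)
          · have : d = -(1/8) := by linear_combination h9
            subst this
            exact Or.inr (Or.inl (by norm_num))
        · -- d ≠ 0, e = 0, f ≠ 0 : impossible
          exfalso
          have : d * f = 0 := by
            linear_combination (-1/2)*h5 + (((1:ℂ) - 8*a - 32*b - 8*c)/2)*he
          exact absurd this (mul_ne_zero hd hf)
      · by_cases hf : f = 0
        · -- d ≠ 0, e ≠ 0, f = 0 : impossible
          exfalso
          have : d * e = 0 := by
            linear_combination (-1/2)*h6 + (((1:ℂ) - 8*a - 8*b - 32*c)/2)*hf
          exact absurd this (mul_ne_zero hd he)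
        · -- d, e, f all nonzero : impossible
          exfalso
          have key1 : (d*e) * (((1:ℂ) - 32*a - 8*b - 8*c)*((1:ℂ) - 8*a - 32*b - 8*c)) = (d*e) * (4*f^2) := by
            linear_combination (e*((1:ℂ) - 8*a - 32*b - 8*c))*h4 + (2*e*f)*h5
          have hab := mul_left_cancel₀ (mul_ne_zero hd he) key1
          have key2 : (d*f) * (((1:ℂ) - 32*a - 8*b - 8*c)*((1:ℂ) - 8*a - 8*b - 32*c)) = (d*f) * (4*e^2) := by
            linear_combination (f*((1:ℂ) - 8*a - 8*b - 32*c))*h4 + (2*e*f)*h6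
          have hac := mul_left_cancel₀ (mul_ne_zero hd hf) key2
          have key3 : (e*f) * (((1:ℂ) - 8*a - 32*b - 8*c)*((1:ℂ) - 8*a - 8*b - 32*c)) = (e*f) * (4*d^2) := by
            linear_combination (f*((1:ℂ) - 8*a - 8*b - 32*c))*h5 + (2*d*f)*h6
          have hbc := mul_left_cancel₀ (mul_ne_zero he hf) key3
          have hT1 : ((1:ℂ) - 8*a - 32*b - 8*c)*((1:ℂ) - 8*a - 8*b - 32*c) = 4*(a - 16*a^2 - 4*a*b - 4*a*c + 4*b*c) := by linear_combination hbc - 4*h1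
          have hT2 : ((1:ℂ) - 32*a - 8*b - 8*c)*((1:ℂ) - 8*a - 8*b - 32*c) = 4*(b - 16*b^2 - 4*b*c - 4*a*b + 4*a*c) := by linear_combination hac - 4*h2
          have hT3 : ((1:ℂ) - 32*a - 8*b - 8*c)*((1:ℂ) - 8*a - 32*b - 8*c) = 4*(c - 16*c^2 - 4*a*c - 4*b*c + 4*a*b) := by linear_combination hab - 4*h3
          have hT4 : (1:ℂ)/16 = 32*(a^2+b^2+c^2) + 16*(a*b+a*c+b*c) + (((1:ℂ) - 8*a - 32*b - 8*c)*((1:ℂ) - 8*a - 8*b - 32*c) + ((1:ℂ) - 32*a - 8*b - 8*c)*((1:ℂ) - 8*a - 8*b - 32*c) + ((1:ℂ) - 32*a - 8*b - 8*c)*((1:ℂ) - 8*a - 32*b - 8*c))/2 := by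
            linear_combination h7 - (1/2)*hbc - (1/2)*hac - (1/2)*hab
          have hone : (1:ℂ) = 0 := by linear_combination ((279703901/2111746) + (-1751226250280283503/262853753875167)*c + (-511650773128231528/13834408098693)*c^2 + (537844953892686080/658781338033)*c^3 + (-159150681918183409/20219519528859)*b + (26670691108356832/94111619719)*b*c + (2583114547836820160/658781338033)*b*c^2 + (897541928100163144/13834408098693)*b^2 + (-1854601868053440/658781338033)*b^2*c + (8649187224595200/658781338033)*b^3 + (1469228848/1055873)*a + (494327074149520384/13834408098693)*a*c + (2153862722498560/658781338033)*a*c^2 + (-151357584889368448/13834408098693)*a*b + (2240237900712960/28642666871)*a*b*c + (1370168273203200/50675487541)*a*b^2) * hT1 + ((56279597313316241/318191386269939) + (-599377695461692487/87617917958389)*c + (-7440936099834531048/106063795423313)*c^2 + (560626669658625280/658781338033)*c^3 + (-246796602114960500/24476260482303)*b + (3342519553341404720/13834408098693)*b*c + (2582021475062417600/658781338033)*b*c^2 + (1096198758267459232/13834408098693)*b^2 + (-11249631884689920/658781338033)*b^2*c + (-14729308936934400/658781338033)*b^3 + (-103328284844500032/287887444720421)*a + (-17513835552/1868083)*a*c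 + (-1076931361249280/658781338033)*a*c^2 + (75678792444684224/13834408098693)*a*b + (-1120118950356480/28642666871)*a*b*c + (-685084136601600/50675487541)*a*b^2) * hT2 + ((18772228059028621/97905041929212) + (-2500619073933753424/318191386269939)*c + (-774052921193010208/13834408098693)*c^2 + (541210364396590080/658781338033)*c^3 + (-920915925752807001/87617917958389)*b + (90546763071572336/337424587773)*b*c + (2527647424193763840/658781338033)*b*c^2 + (7881207827949789640/106063795423313)*b^2 + (-1102983781492800/94111619719)*b^2*c + (-1284532756128000/658781338033)*b^3 + (-96966892113452216/287887444720421)*a + (-117461833028544800/13834408098693)*a*c) * hT3 + ((367307212/1055873) + (-8110055405584/558556817)*c + (-66179413984000/558556817)*c^2 + (40375325122560/24285079)*c^3 + (-10985455812832/558556817)*b + (12807735215680/24285079)*b*c + (187632554158080/24285079)*b*c^2 + (79897025525760/558556817)*b^2) * hT4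
          exact one_ne_zero hone
  · rintro (h | h | h | h | h | h) <;>
      (simp only [Prod.mk.injEq] at h
       obtain ⟨ha, hb, hc, hd, he, hf⟩ := h
       subst ha; subst hb; subst hc; subst hd; subst he; subst hf
       norm_num)
end

section
/- Let L = ℤα₁ ⊕ ℤα₂ with (αᵢ,αⱼ) = 4δᵢⱼ. Then L ≅ √2A₁ ⊥ √2A₁, and the 5-dimensional degree-2 algebra spanned by ω₁, ω₂, ω₃, ω₄, m := α₁(-1)α₂(-1) with relations ωᵢ × ωⱼ = 2δᵢⱼωᵢ, ωᵢ × m = (1/2)m, m × m = 4α₁(-1)² + 4α₂(-1)², (ωᵢ,ωᵢ) = 1/4, contains exactly four Virasoro vectors of central charge 1/2 (i.e. elements u with u × u = 2u and (u,u) = 1/4), namely ω₁, ω₂, ω₃, ω₄. -/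
/-- in the 5-dimensional degree-2 algebra of `V_L⁺` for
`L ≅ √2A₁ ⊥ √2A₁`, the only Virasoro vectors of central charge 1/2
(`u × u = 2u`, `(u,u) = 1/4`) are `ω₁, ω₂, ω₃, ω₄`. -/
theorem stmt_19 (A : Type*) [AddCommGroup A] [Module ℂ A]
    (mul : A →ₗ[ℂ] A →ₗ[ℂ] A) (hcomm : ∀ u v, mul u v = mul v u)
    (Bf : A →ₗ[ℂ] A →ₗ[ℂ] ℂ) (hsymm : ∀ u v, Bf u v = Bf v u)
    (ω : Fin 4 → A) (mm : A)
    (hind : LinearIndependent ℂ ![ω 0, ω 1, ω 2, ω 3, mm])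
    (hspan : Submodule.span ℂ ({ω 0, ω 1, ω 2, ω 3, mm} : Set A) = ⊤)
    (hωω : ∀ i j, mul (ω i) (ω j) = if i = j then (2 : ℂ) • ω i else 0)
    (hωm : ∀ i, mul (ω i) mm = (1 / 2 : ℂ) • mm)
    (hmm : mul mm mm = (32 : ℂ) • (ω 0 + ω 1 + ω 2 + ω 3))
    (hBωω : ∀ i j, Bf (ω i) (ω j) = if i = j then 1 / 4 else 0)
    (hBωm : ∀ i, Bf (ω i) mm = 0)
    (hBmm : Bf mm mm = 16) :
    ∀ u : A, (mul u u = (2 : ℂ) • u ∧ Bf u u = 1 / 4) ↔ ∃ i, u = ω i := by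
  have hmω : ∀ i, mul mm (ω i) = (1 / 2 : ℂ) • mm := fun i => (hcomm mm (ω i)).trans (hωm i)
  have hBmω : ∀ i, Bf mm (ω i) = 0 := fun i => (hsymm mm (ω i)).trans (hBωm i)
  intro u
  constructor
  · rintro ⟨h1, h2⟩
    set v : Fin 5 → A := ![ω 0, ω 1, ω 2, ω 3, mm] with hv
    have hrange : Set.range v = ({ω 0, ω 1, ω 2, ω 3, mm} : Set A) := by
      ext x
      simp [hv, Matrix.range_cons, Matrix.range_empty]
      tauto
    have hu : u ∈ Submodule.span ℂ (Set.range v) := by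
      rw [hrange, hspan]; trivial
    obtain ⟨c, hc⟩ := (Submodule.mem_span_range_iff_exists_fun ℂ).mp hu
    rw [Fin.sum_univ_five] at hc
    simp only [hv, Matrix.cons_val_zero, Matrix.cons_val_one, Matrix.head_cons,
      Matrix.cons_val_two, Matrix.tail_cons, Matrix.cons_val_three,
      Matrix.cons_val_four] at hc
    set g : Fin 5 → ℂ := ![2*c 0^2 + 32*c 4^2 - 2*c 0, 2*c 1^2 + 32*c 4^2 - 2*c 1,
      2*c 2^2 + 32*c 4^2 - 2*c 2, 2*c 3^2 + 32*c 4^2 - 2*c 3,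
      (c 0 + c 1 + c 2 + c 3)*c 4 - 2*c 4] with hg
    have h1' := h1
    rw [← hc] at h1'
    simp only [map_add, map_smul, LinearMap.add_apply, LinearMap.smul_apply, hωω, hωm, hmω,
      hmm, Fin.reduceEq, if_true, if_false, reduceIte, smul_zero, add_zero, zero_add,
      smul_add, smul_smul] at h1'
    have hs : ∑ i, g i • v i = 0 := by
      rw [Fin.sum_univ_five]
      simp only [hg, hv, Matrix.cons_val_zero, Matrix.cons_val_one, Matrix.head_cons,
        Matrix.cons_val_two, Matrix.tail_cons, Matrix.cons_val_three, Matrix.cons_val_four]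
      linear_combination (norm := module) h1'
    have hz := Fintype.linearIndependent_iff.mp hind g hs
    have e0 := hz 0; have e1 := hz 1; have e2 := hz 2; have e3 := hz 3; have e4 := hz 4
    simp only [hg, Matrix.cons_val_zero, Matrix.cons_val_one, Matrix.head_cons,
      Matrix.cons_val_two, Matrix.tail_cons, Matrix.cons_val_three,
      Matrix.cons_val_four] at e0 e1 e2 e3 e4
    have h2' := h2
    rw [← hc] at h2'
    simp only [map_add, map_smul, LinearMap.add_apply, LinearMap.smul_apply, hBωω, hBωm, hBmω,
      hBmm, Fin.reduceEq, if_true, if_false, reduceIte, smul_eq_mul, mul_zero, add_zero,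
      zero_add] at h2'
    have hsum : c 0 + c 1 + c 2 + c 3 = 1 := by
      linear_combination 4*h2' - (e0 + e1 + e2 + e3)/2
    have hx : c 4 = 0 := by linear_combination c 4 * hsum - e4
    have q : ∀ i : Fin 4, ∀ ci : ℂ, 2*ci^2 + 32*c 4^2 - 2*ci = 0 → ci = 0 ∨ ci = 1 := by
      intro i ci hci
      have : ci * (ci - 1) = 0 := by rw [hx] at hci; linear_combination hci / 2
      rcases mul_eq_zero.mp this with h | h
      · exact Or.inl h
      · exact Or.inr (by linear_combination h)
    rcases q 0 _ e0 with k0 | k0 <;> rcases q 1 _ e1 with k1 | k1 <;>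
      rcases q 2 _ e2 with k2 | k2 <;> rcases q 3 _ e3 with k3 | k3 <;>
      first
        | (refine ⟨0, ?_⟩; rw [← hc, k0, k1, k2, k3, hx]; simp; done)
        | (refine ⟨1, ?_⟩; rw [← hc, k0, k1, k2, k3, hx]; simp; done)
        | (refine ⟨2, ?_⟩; rw [← hc, k0, k1, k2, k3, hx]; simp; done)
        | (refine ⟨3, ?_⟩; rw [← hc, k0, k1, k2, k3, hx]; simp; done)
        | (rw [k0, k1, k2, k3] at hsum; norm_num at hsum)
  · rintro ⟨i, rfl⟩
    refine ⟨?_, ?_⟩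
    · rw [hωω i i]; simp
    · rw [hBωω i i]; simp
end
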